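/- arXiv:1904.02812 — 3 statements merged into one kernel-verified Lean document; each statement's English description precedes it below -/
import Mathlib

section
/- If u and v are two linearly independent vectors in a real vector space and m ≥ 1, then the m+1 symmetric tensor powers (a·u + b·v)^{⊙m}, as (a,b) ranges over m+1 pairwise linearly independent vectors in ℝ², are linearly independent in the m-th symmetric power of the vector space. -/
/-!
Evaluating at the functionals `φ` with `(φ u, φ v) = (x, y)` (these exist since `u, v` are
independent) reduces the claim to the binary forms `(a x + b y)^m`. A relation
`∑ c_k (a_k x + b_k)^m = 0` forces, coefficient by coefficient in `x`,
`∑ c_k a_k^j b_k^(m-j) = 0` for all `j ≤ m`, i.e. `c` is killed by the projective Vandermonde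
matrix of the points `(a_k : b_k)`, whose determinant `∏_{i<j} (a_j b_i - a_i b_j)` is nonzero
by pairwise independence.
-/

/-- The symmetric power `w^{⊙m}` of a vector, modeled faithfully as the degree-`m`
polynomial function `φ ↦ (φ w)^m` on the dual space (char-0 field, so this
embedding of `Sym^m V` into functions on the dual is injective). -/
noncomputable def symPowFun (V : Type*) [AddCommGroup V] [Module ℝ V] (m : ℕ) (w : V) :
    Module.Dual ℝ V → ℝ := fun φ => (φ w) ^ m

open Polynomial

lemma Polynomial.coeff_C_mul_X_add_C_pow {R : Type*} [CommRing R] (p q : R) {n j : ℕ}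
    (hj : j ≤ n) : ((C p * X + C q) ^ n).coeff j = p ^ j * q ^ (n - j) * n.choose j := by
  rw [add_pow, finsetSum_coeff]
  simp_rw [mul_pow, ← C_pow, mul_comm (C _ * X ^ _), mul_assoc, ← Nat.cast_comm, ← C_eq_natCast,
    ← mul_assoc, ← C_mul, coeff_C_mul_X_pow]
  rw [Finset.sum_ite_eq (Finset.range (n + 1)), if_pos (Finset.mem_range_succ_iff.mpr hj)]
  ring

lemma sum_mul_pow_mul_pow_eq_zero_of_forall_sum_pow_eq_zero {K ι : Type*} [Field K] [CharZero K]
    [Fintype ι] {c p q : ι → K} {n : ℕ} (h : ∀ x, ∑ k, c k * (p k * x + q k) ^ n = 0)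
    {j : ℕ} (hj : j ≤ n) : ∑ k, c k * (p k ^ j * q k ^ (n - j)) = 0 := by
  have hP : ∑ k, C (c k) * (C (p k) * X + C (q k)) ^ n = 0 :=
    Polynomial.funext fun x => by simpa [eval_finsetSum] using h x
  have := congrArg (coeff · j) hP
  simp only [finsetSum_coeff, coeff_C_mul, coeff_C_mul_X_add_C_pow _ _ hj, coeff_zero] at this
  simp only [← mul_assoc, ← Finset.sum_mul, mul_eq_zero, Nat.cast_eq_zero,
    (Nat.choose_pos hj).ne', or_false] at this
  simpa only [mul_assoc] using this

lemma LinearIndependent.pair_fst_mul_snd_sub_ne_zero {R : Type*} [CommRing R] [Nontrivial R]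
    {p q : R × R} (h : LinearIndependent R ![p, q]) : q.1 * p.2 - p.1 * q.2 ≠ 0 := by
  intro hdet
  have H := LinearIndependent.pair_iff.mp h
  have h₁ := H q.2 (-p.2) <| Prod.ext
    (show q.2 * p.1 + -p.2 * q.1 = 0 by linear_combination -hdet)
    (show q.2 * p.2 + -p.2 * q.2 = 0 by ring)
  have h₂ := H (-q.1) p.1 <| Prod.ext
    (show -q.1 * p.1 + p.1 * q.1 = 0 by ring)
    (show -q.1 * p.2 + p.1 * q.2 = 0 by linear_combination -hdet)
  exact h.ne_zero 0 (Prod.ext (by simpa using h₂.2) (by simpa using h₁.2))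

lemma linearIndependent_linearForm_pow {K : Type*} [Field K] [CharZero K] {n : ℕ}
    {a : Fin (n + 1) → K × K} (ha : Pairwise fun i j => LinearIndependent K ![a i, a j]) :
    LinearIndependent K fun k (z : K × K) => ((a k).1 * z.1 + (a k).2 * z.2) ^ n := by
  rw [Fintype.linearIndependent_iff]
  intro c hc
  have hcoeff : Matrix.vecMul c (Matrix.projVandermonde (Prod.fst ∘ a) (Prod.snd ∘ a)) = 0 := by
    funext j
    simp only [Matrix.vecMul, dotProduct, Matrix.projVandermonde_apply, Fin.val_rev,
      Nat.add_sub_add_right, Function.comp_apply, Pi.zero_apply]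
    refine sum_mul_pow_mul_pow_eq_zero_of_forall_sum_pow_eq_zero (n := n) (fun x => ?_) j.is_le
    simpa using congrFun hc (x, 1)
  have hdet : (Matrix.projVandermonde (Prod.fst ∘ a) (Prod.snd ∘ a)).det ≠ 0 := by
    rw [Matrix.det_projVandermonde]
    exact Finset.prod_ne_zero_iff.mpr fun i _ => Finset.prod_ne_zero_iff.mpr fun j hj =>
      (ha (Finset.mem_Ioi.mp hj).ne).pair_fst_mul_snd_sub_ne_zero
  exact congrFun (Matrix.eq_zero_of_vecMul_eq_zero hdet hcoeff)

lemma LinearIndependent.surjective_dual_apply_pair {K V : Type*} [Field K] [AddCommGroup V]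
    [Module K V] {u v : V} (huv : LinearIndependent K ![u, v]) :
    Function.Surjective fun φ : Module.Dual K V => (φ u, φ v) := by
  let f : K × K →ₗ[K] V :=
    (LinearMap.toSpanSingleton K V u).coprod (LinearMap.toSpanSingleton K V v)
  have hf : Function.Injective f := by
    rw [← LinearMap.ker_eq_bot, LinearMap.ker_eq_bot']
    rintro ⟨s, t⟩ hst
    simpa using LinearIndependent.pair_iff.mp huv s t hst
  intro z
  obtain ⟨φ, hφ⟩ := LinearMap.dualMap_surjective_of_injective hf
    ((LinearMap.fst K K K).smulRight z.1 + (LinearMap.snd K K K).smulRight z.2)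
  refine ⟨φ, Prod.ext ?_ ?_⟩
  · simpa [f] using LinearMap.congr_fun hφ (1, 0)
  · simpa [f] using LinearMap.congr_fun hφ (0, 1)

theorem symPow_linearIndependent_of_pairwise_general
    (V : Type*) [AddCommGroup V] [Module ℝ V] (u v : V)
    (huv : LinearIndependent ℝ ![u, v]) (m : ℕ)
    (a : Fin (m + 1) → ℝ × ℝ)
    (ha : ∀ i j, i ≠ j → LinearIndependent ℝ ![a i, a j]) :
    LinearIndependent ℝ
      (fun k : Fin (m + 1) => symPowFun V m ((a k).1 • u + (a k).2 • v)) := by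
  let π : Module.Dual ℝ V → ℝ × ℝ := fun φ => (φ u, φ v)
  have hπ : Function.Injective (LinearMap.funLeft ℝ ℝ π) :=
    LinearMap.funLeft_injective_of_surjective _ _ _ huv.surjective_dual_apply_pair
  have hcomp : (fun k => symPowFun V m ((a k).1 • u + (a k).2 • v)) =
      LinearMap.funLeft ℝ ℝ π ∘ fun k (z : ℝ × ℝ) => ((a k).1 * z.1 + (a k).2 * z.2) ^ m := by
    ext k φ
    simp [symPowFun, π, LinearMap.funLeft_apply]
  rw [hcomp]
  exact (linearIndependent_linearForm_pow ha).map' _ (LinearMap.ker_eq_bot.mpr hπ)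

/-- If u, v are linearly independent and (a k) are m+1 pairwise linearly independent
pairs in ℝ², then the symmetric powers ((a k).1 • u + (a k).2 • v)^{⊙m} are
linearly independent in Sym^m V. -/
theorem symPow_linearIndependent_of_pairwise
    (V : Type*) [AddCommGroup V] [Module ℝ V] (u v : V)
    (huv : LinearIndependent ℝ ![u, v]) (m : ℕ) (hm : 1 ≤ m)
    (a : Fin (m + 1) → ℝ × ℝ)
    (ha : ∀ i j, i ≠ j → LinearIndependent ℝ ![a i, a j]) :
    LinearIndependent ℝ
      (fun k : Fin (m + 1) => symPowFun V m ((a k).1 • u + (a k).2 • v)) :=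
  symPow_linearIndependent_of_pairwise_general V u v huv m a ha
end

section
/- If v₁, …, v_{m+1} are vectors in ℝ² any two of which are linearly independent, then the symmetric powers v₁^{⊙m}, …, v_{m+1}^{⊙m} form a basis of Sym^m(ℝ²); in particular they are linearly independent. -/
/-- Euclidean dot product on ℝ². -/
def dot2 (u v : Fin 2 → ℝ) : ℝ := ∑ i, u i * v i

/-- The symmetric power `w^{⊙m}` of `w ∈ ℝ²`, modeled faithfully as the polynomial
function `y ↦ ⟨w, y⟩^m`; `Sym^m(ℝ²)` is then the span of all such pure powers. -/
noncomputable def symPow2 (m : ℕ) (w : Fin 2 → ℝ) : (Fin 2 → ℝ) → ℝ :=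
  fun y => (dot2 w y) ^ m

/-- For a finite family of vectors in ℝ², there is `s` such that `w i 0 + s * w i 1 ≠ 0`
for every nonzero member of the family. -/
lemma exists_good {ι : Type*} [Finite ι] (w : ι → Fin 2 → ℝ) :
    ∃ s : ℝ, ∀ i, w i ≠ 0 → w i 0 + s * w i 1 ≠ 0 := by
  have hfin : (⋃ i, {s : ℝ | w i ≠ 0 ∧ w i 0 + s * w i 1 = 0}).Finite := by
    refine Set.finite_iUnion fun i => Set.Subsingleton.finite ?_
    rintro a ⟨hw, ha⟩ b ⟨-, hb⟩
    by_cases h1 : w i 1 = 0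
    · exfalso
      apply hw
      funext j
      fin_cases j
      · simpa [h1] using ha
      · exact h1
    · have h : (a - b) * w i 1 = 0 := by nlinarith [ha, hb]
      rcases mul_eq_zero.1 h with h | h
      · linarith
      · exact absurd h h1
  obtain ⟨s, hs⟩ := hfin.infinite_compl.nonempty
  exact ⟨s, fun i hi hzero => hs (Set.mem_iUnion.2 ⟨i, hi, hzero⟩)⟩

/-- Linear independence of functions follows from invertibility of an evaluation matrix. -/
lemma li_of_eval {n : ℕ} (f : Fin n → (Fin 2 → ℝ) → ℝ) (y : Fin n → Fin 2 → ℝ)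
    (h : (Matrix.of fun k j => f k (y j)).det ≠ 0) : LinearIndependent ℝ f := by
  rw [Fintype.linearIndependent_iff]
  intro g hg
  have hM : Matrix.vecMul g (Matrix.of fun k j => f k (y j)) = 0 := by
    funext j
    have := congrFun hg (y j)
    simpa [Matrix.vecMul, dotProduct, Finset.sum_apply] using this
  have h0 := Matrix.eq_zero_of_vecMul_eq_zero h hM
  exact fun k => congrFun h0 k

lemma symPow2_li (n : ℕ) (v : Fin (n + 1) → Fin 2 → ℝ) (hv0 : ∀ k, v k ≠ 0)
    (hvp : ∀ k l, k ≠ l → LinearIndependent ℝ ![v k, v l]) :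
    LinearIndependent ℝ (fun k : Fin (n + 1) => symPow2 n (v k)) := by
  obtain ⟨s, hs⟩ := exists_good v
  set c : Fin (n + 1) → ℝ := fun k => v k 0 + s * v k 1 with hc
  have hc0 : ∀ k, c k ≠ 0 := fun k => hs k (hv0 k)
  obtain ⟨s', hs'⟩ := exists_good
    (fun p : Fin (n + 1) × Fin (n + 1) => c p.2 • v p.1 - c p.1 • v p.2)
  set d : Fin (n + 1) → ℝ := fun k => v k 0 + s' * v k 1 with hd
  have hcd : ∀ k l, k ≠ l → c l * d k - c k * d l ≠ 0 := by
    intro k l hkl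
    have hP : c l • v k - c k • v l ≠ 0 := by
      intro h0
      have h1 := (LinearIndependent.pair_iff.1 (hvp k l hkl)) (c l) (-(c k))
        (by rw [neg_smul, ← sub_eq_add_neg]; exact h0)
      exact hc0 l h1.1
    have h2 := hs' (k, l) hP
    have hexp : (c l • v k - c k • v l) 0 + s' * (c l • v k - c k • v l) 1
        = c l * d k - c k * d l := by
      simp only [Pi.sub_apply, Pi.smul_apply, smul_eq_mul, hd]
      ring
    rwa [hexp] at h2
  set t : Fin (n + 1) → ℝ := fun k => d k / c k with ht
  have htinj : Function.Injective t := by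
    intro k l h
    by_contra hkl
    apply hcd k l hkl
    have h' : d k * c l = d l * c k := (div_eq_div_iff (hc0 k) (hc0 l)).1 h
    linarith
  set y : Fin (n + 1) → Fin 2 → ℝ :=
    fun j => (![1, s] : Fin 2 → ℝ) + (j : ℝ) • (![1, s'] : Fin 2 → ℝ) with hy
  have heval : ∀ k j, symPow2 n (v k) (y j) = c k ^ n * (1 + (j : ℝ) * t k) ^ n := by
    intro k j
    have hdk : d k = c k * t k := by
      rw [ht, mul_comm]
      exact (div_mul_cancel₀ (d k) (hc0 k)).symm
    have : dot2 (v k) (y j) = c k * (1 + (j : ℝ) * t k) := by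
      simp only [dot2, Fin.sum_univ_two, hy, Pi.add_apply, Pi.smul_apply, smul_eq_mul,
        Matrix.cons_val_zero, Matrix.cons_val_one, Matrix.head_cons]
      have : v k 0 * (1 + (j : ℝ) * 1) + v k 1 * (s + (j : ℝ) * s') = c k + (j : ℝ) * d k := by
        simp only [hc, hd]; ring
      rw [this, hdk]; ring
    rw [symPow2, this, mul_pow]
  set A : Matrix (Fin (n + 1)) (Fin (n + 1)) ℝ :=
    Matrix.of fun k i => c k ^ n * t k ^ (i : ℕ) with hA
  set B : Matrix (Fin (n + 1)) (Fin (n + 1)) ℝ :=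
    Matrix.of fun j i => ((n.choose i : ℝ)) * (j : ℝ) ^ (i : ℕ) with hB
  have hMAB : (Matrix.of fun k j => symPow2 n (v k) (y j)) = A * B.transpose := by
    ext k j
    rw [Matrix.of_apply, heval, Matrix.mul_apply]
    simp only [hA, hB, Matrix.transpose_apply, Matrix.of_apply]
    have hexp : (1 + (j : ℝ) * t k) ^ n
        = ∑ i ∈ Finset.range (n + 1), ((j : ℝ) * t k) ^ i * (n.choose i : ℝ) := by
      rw [add_comm, add_pow]
      exact Finset.sum_congr rfl fun i _ => by rw [one_pow, mul_one]
    rw [hexp, Finset.mul_sum,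
      ← Fin.sum_univ_eq_sum_range (fun i => c k ^ n * (((j : ℝ) * t k) ^ i * (n.choose i : ℝ)))
        (n + 1)]
    exact Finset.sum_congr rfl fun i _ => by rw [mul_pow]; ring
  have hdetA : A.det ≠ 0 := by
    have : A = Matrix.diagonal (fun k => c k ^ n) * Matrix.vandermonde t := by
      ext k i
      simp [hA, Matrix.diagonal_mul, Matrix.vandermonde]
    rw [this, Matrix.det_mul, Matrix.det_diagonal, Matrix.det_vandermonde]
    refine mul_ne_zero (Finset.prod_ne_zero_iff.2 fun k _ => pow_ne_zero _ (hc0 k)) ?_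
    refine Finset.prod_ne_zero_iff.2 fun i _ => Finset.prod_ne_zero_iff.2 fun j hj => ?_
    have : i < j := Finset.mem_Ioi.1 hj
    exact sub_ne_zero_of_ne (fun h => absurd (htinj h) (ne_of_gt this))
  have hdetB : B.det ≠ 0 := by
    have : B = Matrix.vandermonde (fun j : Fin (n + 1) => ((j : ℕ) : ℝ))
        * Matrix.diagonal (fun i : Fin (n + 1) => ((n.choose i : ℝ))) := by
      ext j i
      simp [hB, Matrix.mul_diagonal, Matrix.vandermonde, mul_comm]
    rw [this, Matrix.det_mul, Matrix.det_diagonal, Matrix.det_vandermonde]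
    refine mul_ne_zero ?_ (Finset.prod_ne_zero_iff.2 fun i _ => ?_)
    · refine Finset.prod_ne_zero_iff.2 fun i _ => Finset.prod_ne_zero_iff.2 fun j hj => ?_
      have hij : i < j := Finset.mem_Ioi.1 hj
      have : ((i : ℕ) : ℝ) < ((j : ℕ) : ℝ) := by exact_mod_cast hij
      exact sub_ne_zero_of_ne (ne_of_gt this)
    · exact Nat.cast_ne_zero.2 (Nat.choose_pos i.is_le).ne'
  refine li_of_eval _ y ?_
  rw [hMAB, Matrix.det_mul, Matrix.det_transpose]
  exact mul_ne_zero hdetA hdetB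

/-- Every pure power lies in the span of the monomials. -/
lemma symPow2_mem_span_monomials (m : ℕ) (w : Fin 2 → ℝ) :
    symPow2 m w ∈ Submodule.span ℝ
      (Set.range (fun i : Fin (m + 1) =>
        (fun y : Fin 2 → ℝ => y 0 ^ (i : ℕ) * y 1 ^ (m - (i : ℕ))))) := by
  set μ : Fin (m + 1) → ((Fin 2 → ℝ) → ℝ) :=
    fun i => fun y : Fin 2 → ℝ => y 0 ^ (i : ℕ) * y 1 ^ (m - (i : ℕ)) with hμ
  have hrepr : symPow2 m w
      = ∑ i : Fin (m + 1), ((m.choose i : ℝ) * w 0 ^ (i : ℕ) * w 1 ^ (m - (i : ℕ))) • μ i := by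
    funext y
    simp only [symPow2, dot2, Fin.sum_univ_two, Finset.sum_apply, Pi.smul_apply, smul_eq_mul, hμ]
    rw [add_pow, ← Fin.sum_univ_eq_sum_range
      (fun i => (w 0 * y 0) ^ i * (w 1 * y 1) ^ (m - i) * (m.choose i : ℝ)) (m + 1)]
    exact Finset.sum_congr rfl fun i _ => by rw [mul_pow, mul_pow]; ring
  rw [hrepr]
  exact Submodule.sum_mem _ fun i _ =>
    Submodule.smul_mem _ _ (Submodule.subset_span ⟨i, rfl⟩)

/-- If v₁, …, v_{m+1} ∈ ℝ² are pairwise linearly independent, then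
v₁^{⊙m}, …, v_{m+1}^{⊙m} are linearly independent and span Sym^m(ℝ²),
i.e. they form a basis of Sym^m(ℝ²). -/
theorem symPow2_basis (m : ℕ) (v : Fin (m + 1) → Fin 2 → ℝ)
    (hv : ∀ i j, i ≠ j → LinearIndependent ℝ ![v i, v j]) :
    LinearIndependent ℝ (fun k : Fin (m + 1) => symPow2 m (v k)) ∧
    Submodule.span ℝ (Set.range (fun k : Fin (m + 1) => symPow2 m (v k))) =
      Submodule.span ℝ {f : (Fin 2 → ℝ) → ℝ | ∃ w : Fin 2 → ℝ, f = symPow2 m w} := by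
  have hli : LinearIndependent ℝ (fun k : Fin (m + 1) => symPow2 m (v k)) := by
    rcases Nat.eq_zero_or_pos m with hm | hm
    · subst hm
      rw [Fintype.linearIndependent_iff]
      intro g hg i
      have h0 := congrFun hg 0
      fin_cases i
      simpa [symPow2, Fin.sum_univ_one] using h0
    · have hv0 : ∀ k, v k ≠ 0 := by
        intro k
        rcases eq_or_ne k 0 with rfl | hk
        · have h1 : (0 : Fin (m + 1)) ≠ ⟨1, by omega⟩ := by
            simp [Fin.ext_iff]
          have := (hv 0 ⟨1, by omega⟩ h1).ne_zero 0
          simpa using this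
        · have := (hv k 0 hk).ne_zero 0
          simpa using this
      exact symPow2_li m v hv0 (fun k l h => hv k l h)
  refine ⟨hli, ?_⟩
  set μ : Fin (m + 1) → ((Fin 2 → ℝ) → ℝ) :=
    fun i => fun y : Fin 2 → ℝ => y 0 ^ (i : ℕ) * y 1 ^ (m - (i : ℕ)) with hμ
  set V := Submodule.span ℝ (Set.range (fun k : Fin (m + 1) => symPow2 m (v k))) with hV
  set P := Submodule.span ℝ {f : (Fin 2 → ℝ) → ℝ | ∃ w : Fin 2 → ℝ, f = symPow2 m w} with hP
  set W := Submodule.span ℝ (Set.range μ) with hW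
  have hVP : V ≤ P := by
    apply Submodule.span_mono
    rintro f ⟨k, rfl⟩
    exact ⟨v k, rfl⟩
  have hPW : P ≤ W := by
    rw [hP, Submodule.span_le]
    rintro f ⟨w, rfl⟩
    exact symPow2_mem_span_monomials m w
  haveI : FiniteDimensional ℝ W := FiniteDimensional.span_of_finite ℝ (Set.finite_range μ)
  have hWrank : Module.finrank ℝ W ≤ m + 1 := by
    have := finrank_range_le_card (R := ℝ) μ
    rw [Set.finrank] at this
    simpa using this
  have hVrank : Module.finrank ℝ V = m + 1 := by
    rw [hV, finrank_span_eq_card hli, Fintype.card_fin]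
  have hVW : V = W := by
    refine Submodule.eq_of_le_of_finrank_le (le_trans hVP hPW) ?_
    rw [hVrank]
    exact hWrank
  exact le_antisymm hVP (hPW.trans_eq hVW.symm)
end

section
/- Let ξ ∈ ℝ³ be nonzero and let w₁, …, w_{m+1} be vectors in the plane ξ^⊥ any two of which are linearly independent. For 0 ≤ p ≤ m, let U_p be the set of symmetric tensors { w_k^{⊙p} ⊙ ξ^{⊙(m-p)} : 1 ≤ k ≤ m+1 } in Sym^m(ℝ³). Then the span of U_p has dimension exactly p+1. -/
/-!
Every `w k` lies in the plane `ξ^⊥`, which is spanned by `w 0` and `w 1`; writing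
`w k = α k • w 0 + β k • w 1`, the binomial theorem puts every `symMix m p (w k) ξ` in the span
of the `p + 1` functions `⟨w 0, y⟩ ^ j ⟨w 1, y⟩ ^ (p - j) ⟨ξ, y⟩ ^ (m - p)`. Conversely, since
`ξ, w 0, w 1` is a basis, one can restrict to the points `y` with `⟨ξ, y⟩ = 1`, `⟨w 0, y⟩ = s`,
`⟨w 1, y⟩ = 1`, where `symMix m p (w k) ξ` becomes `(α k * s + β k) ^ p`. Pairwise independence
of the `w k` makes the points `(α k, β k)` pairwise non-proportional, and then `p + 1` such powers
are linearly independent because their coefficient matrix is a projective Vandermonde matrix.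
-/

def dot3 (u v : Fin 3 → ℝ) : ℝ := ∑ i, u i * v i

/-- The symmetric tensor w^{⊙p} ⊙ ξ^{⊙(m-p)} in Sym^m(ℝ³), modeled faithfully as
the polynomial function y ↦ ⟨w,y⟩^p ⟨ξ,y⟩^{m-p}. -/
noncomputable def symMix (m p : ℕ) (w ξ : Fin 3 → ℝ) : (Fin 3 → ℝ) → ℝ :=
  fun y => (dot3 w y) ^ p * (dot3 ξ y) ^ (m - p)

open Matrix Module Submodule

theorem linearIndependent_mul_add_pow {K : Type*} [Field K] [CharZero K] {n : ℕ}
    {a b : Fin (n + 1) → K} (hab : Pairwise fun i j => a i * b j ≠ a j * b i) :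
    LinearIndependent K fun k (s : K) => (a k * s + b k) ^ n := by
  rw [Fintype.linearIndependent_iff]
  intro c hc
  set e := vecMul c (projVandermonde a b)
  have hsum : ∀ s : K, ∑ j : Fin (n + 1), s ^ (j : ℕ) * (n.choose j * e j) = 0 := by
    intro s
    have hcs := congrFun hc s
    simp only [Finset.sum_apply, Pi.smul_apply, smul_eq_mul, Pi.zero_apply] at hcs
    rw [← hcs]
    simp only [add_pow, Finset.mul_sum, e, vecMul, dotProduct, projVandermonde_apply, Fin.val_rev]
    rw [Finset.sum_comm]
    refine Finset.sum_congr rfl fun k _ => ?_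
    rw [← Fin.sum_univ_eq_sum_range]
    refine Finset.sum_congr rfl fun j _ => ?_
    rw [show n + 1 - (j + 1) = n - j by omega]
    ring
  have hbinom : (fun j : Fin (n + 1) => (n.choose j : K) * e j) = 0 :=
    eq_zero_of_forall_index_sum_pow_mul_eq_zero (f := fun j : Fin (n + 1) => (j : K))
      (Nat.cast_injective.comp Fin.val_injective) fun i => hsum i
  have he : e = 0 := funext fun j => by
    simpa [Nat.choose_eq_zero_iff, not_lt.mpr (Nat.lt_succ_iff.mp j.isLt)] using congrFun hbinom j
  refine congrFun (eq_zero_of_vecMul_eq_zero ?_ he)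
  rw [det_projVandermonde]
  refine Finset.prod_ne_zero_iff.mpr fun i _ => Finset.prod_ne_zero_iff.mpr fun j hj => ?_
  exact sub_ne_zero.mpr (hab (Finset.mem_Ioi.mp hj).ne')

theorem mul_ne_mul_of_linearIndependent_pair {K M : Type*} [Field K] [AddCommGroup M] [Module K M]
    {u v : M} {α β α' β' : K} (h : LinearIndependent K ![α • u + β • v, α' • u + β' • v]) :
    α * β' ≠ α' * β := by
  intro hdet
  have hβ := LinearIndependent.pair_iff.mp h β' (-β) (by
    linear_combination (norm := module) hdet • u)
  have hα := LinearIndependent.pair_iff.mp h α' (-α) (by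
    linear_combination (norm := module) (-hdet) • v)
  have hx : α • u + β • v = 0 := by simp [neg_eq_zero.mp hα.2, neg_eq_zero.mp hβ.2]
  exact h.ne_zero 0 hx

theorem exists_dotProduct_eq_of_linearIndependent {K ι : Type*} [Field K] [Fintype ι]
    [DecidableEq ι] {u : ι → ι → K} (hu : LinearIndependent K u) (t : ι → K) :
    ∃ y, ∀ i, u i ⬝ᵥ y = t i := by
  obtain ⟨y, hy⟩ := mulVec_surjective_iff_isUnit.mpr
    ((linearIndependent_rows_iff_isUnit (A := of u)).mp hu) t
  exact ⟨y, congrFun hy⟩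

theorem card_le_finrank_span_range {K M ι κ : Type*} [Field K] [AddCommGroup M] [Module K M]
    [Finite ι] [Fintype κ] {f : ι → M} {e : κ → ι} (h : LinearIndependent K (f ∘ e)) :
    Fintype.card κ ≤ finrank K (span K (Set.range f)) := by
  have : FiniteDimensional K (span K (Set.range f)) := .span_of_finite K (Set.finite_range f)
  rw [← finrank_span_eq_card h]
  exact finrank_mono (span_mono (Set.range_comp_subset_range e f))

theorem dot3_eq_dotProduct (u v : Fin 3 → ℝ) : dot3 u v = u ⬝ᵥ v := rfl

section Plane

variable {ξ u v : Fin 3 → ℝ}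

theorem linearIndependent_cons_of_dot3_eq_zero (hξ : ξ ≠ 0) (hu : dot3 u ξ = 0)
    (hv : dot3 v ξ = 0) (huv : LinearIndependent ℝ ![u, v]) :
    LinearIndependent ℝ ![ξ, u, v] := by
  refine linearIndependent_finCons.mpr ⟨huv, fun hmem => hξ ?_⟩
  obtain ⟨c, hc⟩ := (mem_span_range_iff_exists_fun ℝ).mp hmem
  rw [Fin.sum_univ_two] at hc
  rw [← dotProduct_self_eq_zero]
  nth_rw 2 [← hc]
  simp only [dot3_eq_dotProduct] at hu hv
  simp [dotProduct_comm ξ, hu, hv]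

theorem exists_eq_smul_add_smul_of_dot3_eq_zero (hξ : ξ ≠ 0) (hu : dot3 u ξ = 0)
    (hv : dot3 v ξ = 0) (huv : LinearIndependent ℝ ![u, v]) {w : Fin 3 → ℝ}
    (hw : dot3 w ξ = 0) : ∃ α β : ℝ, w = α • u + β • v := by
  have hspan := (linearIndependent_cons_of_dot3_eq_zero hξ hu hv huv)
    |>.span_eq_top_of_card_eq_finrank' (by simp)
  obtain ⟨c, hc⟩ := (mem_span_range_iff_exists_fun ℝ).mp (hspan ▸ mem_top (x := w))
  simp only [Fin.sum_univ_three, Fin.isValue, cons_val_zero, cons_val_one, cons_val] at hc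
  have hc0 : c 0 = 0 := by
    have hcξ := congrArg (· ⬝ᵥ ξ) hc
    simp only [dot3_eq_dotProduct] at hu hv hw
    simp only [add_dotProduct, smul_dotProduct, hu, hv, hw, smul_eq_mul, mul_zero, add_zero] at hcξ
    exact (mul_eq_zero.mp hcξ).resolve_right (dotProduct_self_eq_zero.not.mpr hξ)
  exact ⟨c 1, c 2, by simpa [hc0] using hc.symm⟩

end Plane

theorem symMix_smul_add_smul_mem_span (m p : ℕ) (u v ξ : Fin 3 → ℝ) (α β : ℝ) :
    symMix m p (α • u + β • v) ξ ∈ span ℝ (Set.range fun j : Fin (p + 1) =>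
      fun y => dot3 u y ^ (j : ℕ) * dot3 v y ^ (p - j) * dot3 ξ y ^ (m - p)) := by
  refine (mem_span_range_iff_exists_fun ℝ).mpr
    ⟨fun j => α ^ (j : ℕ) * β ^ (p - j) * p.choose j, funext fun y => ?_⟩
  simp only [symMix, dot3_eq_dotProduct, add_dotProduct, smul_dotProduct, smul_eq_mul, add_pow,
    Finset.sum_mul, Finset.sum_apply, Pi.smul_apply, ← Fin.sum_univ_eq_sum_range]
  refine Finset.sum_congr rfl fun j _ => ?_
  ring

theorem finrank_span_symMix_le {ι : Type*} (m p : ℕ) {ξ u v : Fin 3 → ℝ} {w : ι → Fin 3 → ℝ}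
    (hw : ∀ k, ∃ α β : ℝ, w k = α • u + β • v) :
    finrank ℝ (span ℝ (Set.range fun k => symMix m p (w k) ξ)) ≤ p + 1 := by
  set g := fun (j : Fin (p + 1)) (y : Fin 3 → ℝ) =>
    dot3 u y ^ (j : ℕ) * dot3 v y ^ (p - j) * dot3 ξ y ^ (m - p)
  have hle : span ℝ (Set.range fun k => symMix m p (w k) ξ) ≤ span ℝ (Set.range g) := by
    refine span_le.mpr (Set.range_subset_iff.mpr fun k => ?_)
    obtain ⟨α, β, hk⟩ := hw k
    exact hk ▸ symMix_smul_add_smul_mem_span m p u v ξ α β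
  have : FiniteDimensional ℝ (span ℝ (Set.range g)) := .span_of_finite ℝ (Set.finite_range g)
  calc finrank ℝ (span ℝ (Set.range fun k => symMix m p (w k) ξ))
      ≤ finrank ℝ (span ℝ (Set.range g)) := finrank_mono hle
    _ ≤ p + 1 := (finrank_range_le_card (R := ℝ) g).trans_eq (Fintype.card_fin _)

theorem linearIndependent_symMix {m p : ℕ} {ξ u v : Fin 3 → ℝ}
    (hξuv : LinearIndependent ℝ ![ξ, u, v]) {w : Fin (p + 1) → Fin 3 → ℝ}
    {α β : Fin (p + 1) → ℝ} (hw : ∀ k, w k = α k • u + β k • v)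
    (hαβ : Pairwise fun i j => α i * β j ≠ α j * β i) :
    LinearIndependent ℝ fun k => symMix m p (w k) ξ := by
  choose y hy using fun s : ℝ =>
    exists_dotProduct_eq_of_linearIndependent (ι := Fin 3) hξuv ![1, s, 1]
  refine LinearIndependent.of_comp (LinearMap.funLeft ℝ ℝ y) ?_
  have hcomp : (LinearMap.funLeft ℝ ℝ y ∘ fun k => symMix m p (w k) ξ) =
      fun k s => (α k * s + β k) ^ p := by
    funext k s
    have h0 := hy s 0
    have h1 := hy s 1
    have h2 := hy s 2
    simp only [Fin.isValue, cons_val_zero, cons_val_one, cons_val] at h0 h1 h2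
    simp [LinearMap.funLeft, symMix, dot3_eq_dotProduct, hw, add_dotProduct, smul_dotProduct, h0,
      h1, h2]
  rw [hcomp]
  exact linearIndependent_mul_add_pow hαβ

/-- For ξ ≠ 0 and w₁,…,w_{m+1} ∈ ξ^⊥ pairwise linearly independent, the span of
U_p = { w_k^{⊙p} ⊙ ξ^{⊙(m-p)} : 1 ≤ k ≤ m+1 } has dimension exactly p+1. -/
theorem span_symMix_dim (m : ℕ) (ξ : Fin 3 → ℝ) (hξ : ξ ≠ 0)
    (w : Fin (m + 1) → Fin 3 → ℝ)
    (hperp : ∀ k, dot3 (w k) ξ = 0)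
    (hpair : ∀ i j, i ≠ j → LinearIndependent ℝ ![w i, w j])
    (p : ℕ) (hp : p ≤ m) :
    Module.finrank ℝ
      ↥(Submodule.span ℝ (Set.range fun k : Fin (m + 1) => symMix m p (w k) ξ)) = p + 1 := by
  obtain _ | m := m
  · obtain rfl : p = 0 := by omega
    have hone : (fun k => symMix 0 0 (w k) ξ) = fun _ => 1 :=
      funext fun k => funext fun y => by simp [symMix]
    rw [hone, Set.range_const]
    exact finrank_span_singleton one_ne_zero
  have hw01 := hpair 0 1 Fin.zero_ne_one
  choose α β hw using fun k =>
    exists_eq_smul_add_smul_of_dot3_eq_zero hξ (hperp 0) (hperp 1) hw01 (hperp k)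
  have hαβ : Pairwise fun k l => α k * β l ≠ α l * β k := fun k l hkl =>
    mul_ne_mul_of_linearIndependent_pair (u := w 0) (v := w 1)
      (by rw [← hw, ← hw]; exact hpair k l hkl)
  let emb : Fin (p + 1) → Fin (m + 2) := Fin.castLE (by omega)
  have hind : LinearIndependent ℝ ((fun k => symMix (m + 1) p (w k) ξ) ∘ emb) :=
    linearIndependent_symMix (w := w ∘ emb) (α := α ∘ emb) (β := β ∘ emb)
      (linearIndependent_cons_of_dot3_eq_zero hξ (hperp 0) (hperp 1) hw01) (fun k => hw (emb k))
      (hαβ.comp_of_injective (Fin.castLE_injective _))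
  refine le_antisymm (finrank_span_symMix_le _ _ fun k => ⟨α k, β k, hw k⟩) ?_
  simpa using card_le_finrank_span_range hind
end
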